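/- Let (X, Y) be a pair of {0,1}-valued random variables with p := P(X=1), q := P(Y=1), and r := P(X=1, Y=1). Then the maximal correlation of (X,Y) equals the absolute value of their Pearson correlation: ρ_m(X;Y) = |ρ_p(X;Y)|. In particular, if p, q ∈ (0,1), then ρ_m(X;Y) = |r − pq| / √(p(1−p)q(1−q)). -/
import Mathlib


open scoped BigOperators

/-- Expectation of a real random variable `F` on a finite sample space with distribution `P`. -/
noncomputable def EE {Ω : Type*} [Fintype Ω] (P : Ω → ℝ) (F : Ω → ℝ) : ℝ :=
  ∑ ω, P ω * F ω

/-- Covariance of two real random variables under `P`. -/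
noncomputable def covF {Ω : Type*} [Fintype Ω] (P : Ω → ℝ) (F G : Ω → ℝ) : ℝ :=
  EE P (fun ω => F ω * G ω) - EE P F * EE P G

/-- Pearson correlation coefficient of two real random variables under `P`
(set to `0` when one of the variances vanishes). -/
noncomputable def pearsonF {Ω : Type*} [Fintype Ω] (P : Ω → ℝ) (F G : Ω → ℝ) : ℝ :=
  if 0 < covF P F F * covF P G G then
    covF P F G / Real.sqrt (covF P F F * covF P G G)
  else 0

/-- Maximal correlation `ρ_m(X;Y)`: the supremum over real-valued functions `f, g` of the
Pearson correlation of `f(X)` and `g(Y)`. -/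
noncomputable def maxCorrF {Ω S T : Type*} [Fintype Ω] (P : Ω → ℝ) (X : Ω → S) (Y : Ω → T) : ℝ :=
  ⨆ fg : (S → ℝ) × (T → ℝ), pearsonF P (fun ω => fg.1 (X ω)) (fun ω => fg.2 (Y ω))

/-- `P(U = v)`. -/
noncomputable def massOn {Ω V : Type*} [Fintype Ω] [DecidableEq V] (P : Ω → ℝ) (U : Ω → V)
    (v : V) : ℝ :=
  ∑ ω, if U ω = v then P ω else 0

/-- The conditional distribution of `P` given `U = v`. -/
noncomputable def condDistOn {Ω V : Type*} [Fintype Ω] [DecidableEq V] (P : Ω → ℝ) (U : Ω → V)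
    (v : V) : Ω → ℝ :=
  fun ω => if U ω = v then P ω / massOn P U v else 0

/-- `E[Cov(F, G | U)] = ∑_v P(U = v) Cov_{P(·|U=v)}(F, G)`. -/
noncomputable def ECondCov {Ω V : Type*} [Fintype Ω] [Fintype V] [DecidableEq V] (P : Ω → ℝ)
    (U : Ω → V) (F G : Ω → ℝ) : ℝ :=
  ∑ v, massOn P U v * covF (condDistOn P U v) F G

/-- Conditional Pearson correlation
`ρ_p(F; G | U) = E[Cov(F,G|U)] / √(E[Var(F|U)] E[Var(G|U)])`
(set to `0` when the denominator vanishes). -/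
noncomputable def condPearsonF {Ω V : Type*} [Fintype Ω] [Fintype V] [DecidableEq V]
    (P : Ω → ℝ) (U : Ω → V) (F G : Ω → ℝ) : ℝ :=
  if 0 < ECondCov P U F F * ECondCov P U G G then
    ECondCov P U F G / Real.sqrt (ECondCov P U F F * ECondCov P U G G)
  else 0

/-- Conditional maximal correlation `ρ_m(X;Y|U)`: the supremum over real-valued functions
`f(x,u), g(y,u)` of `ρ_p(f(X,U); g(Y,U) | U)`. -/
noncomputable def condMaxCorrF {Ω S T V : Type*} [Fintype Ω] [Fintype V] [DecidableEq V]
    (P : Ω → ℝ) (X : Ω → S) (Y : Ω → T) (U : Ω → V) : ℝ :=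
  ⨆ fg : (S × V → ℝ) × (T × V → ℝ),
    condPearsonF P U (fun ω => fg.1 (X ω, U ω)) (fun ω => fg.2 (Y ω, U ω))

/-- A probability distribution on a finite alphabet. -/
def IsProbF {α : Type*} [Fintype α] (P : α → ℝ) : Prop :=
  (∀ x, 0 ≤ P x) ∧ ∑ x, P x = 1

lemma EE_affine {Ω : Type*} [Fintype Ω] (P F : Ω → ℝ) (a c : ℝ) :
    EE P (fun ω => a * F ω + c) = a * EE P F + c * ∑ ω, P ω := by
  simp only [EE, Finset.mul_sum, ← Finset.sum_add_distrib]
  exact Finset.sum_congr rfl fun ω _ => by ring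

lemma EE_mul_affine_left {Ω : Type*} [Fintype Ω] (P F G : Ω → ℝ) (a c : ℝ) :
    EE P (fun ω => (a * F ω + c) * G ω)
      = a * EE P (fun ω => F ω * G ω) + c * EE P G := by
  simp only [EE, Finset.mul_sum, ← Finset.sum_add_distrib]
  exact Finset.sum_congr rfl fun ω _ => by ring

lemma covF_comm {Ω : Type*} [Fintype Ω] (P F G : Ω → ℝ) :
    covF P F G = covF P G F := by
  simp only [covF, EE]
  rw [mul_comm (∑ ω, P ω * F ω)]
  congr 1
  exact Finset.sum_congr rfl fun ω _ => by ring

lemma covF_affine_left {Ω : Type*} [Fintype Ω] (P : Ω → ℝ) (h1 : ∑ ω, P ω = 1)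
    (F G : Ω → ℝ) (a c : ℝ) :
    covF P (fun ω => a * F ω + c) G = a * covF P F G := by
  simp only [covF, EE_mul_affine_left, EE_affine, h1]
  ring

lemma covF_affine_right {Ω : Type*} [Fintype Ω] (P : Ω → ℝ) (h1 : ∑ ω, P ω = 1)
    (F G : Ω → ℝ) (a c : ℝ) :
    covF P F (fun ω => a * G ω + c) = a * covF P F G := by
  rw [covF_comm, covF_affine_left P h1, covF_comm]

lemma covF_self_nonneg {Ω : Type*} [Fintype Ω] (P : Ω → ℝ) (hP : ∀ ω, 0 ≤ P ω)
    (h1 : ∑ ω, P ω = 1) (F : Ω → ℝ) : 0 ≤ covF P F F := by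
  have key : covF P F F = ∑ ω, P ω * (F ω - EE P F) ^ 2 := by
    have h2 : ∑ ω, P ω * (F ω - EE P F) ^ 2
        = ∑ ω, (P ω * (F ω * F ω) - 2 * EE P F * (P ω * F ω) + (EE P F)^2 * P ω) :=
      Finset.sum_congr rfl fun ω _ => by ring
    simp only [covF, EE] at h2 ⊢
    rw [h2, Finset.sum_add_distrib, Finset.sum_sub_distrib, ← Finset.mul_sum, ← Finset.mul_sum, h1]
    ring
  rw [key]
  exact Finset.sum_nonneg fun ω _ => mul_nonneg (hP ω) (sq_nonneg _)

/-- **Maximal correlation of binary random variables.** For a pair of `{0,1}`-valued random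
variables `(X, Y)` with joint distribution `W`, `p = P(X=1)`, `q = P(Y=1)`,
`r = P(X=1, Y=1)`, the maximal correlation equals the absolute value of the Pearson
correlation; in particular, if `p, q ∈ (0,1)`, it equals `|r - pq| / √(p(1-p)q(1-q))`. -/
theorem maxCorr_binary (W : Bool × Bool → ℝ) (hW : IsProbF W)
    (p q r : ℝ)
    (hp : p = W (true, true) + W (true, false))
    (hq : q = W (true, true) + W (false, true))
    (hr : r = W (true, true)) :
    maxCorrF W Prod.fst Prod.snd =
      |pearsonF W (fun ω => if ω.1 = true then (1 : ℝ) else 0)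
        (fun ω => if ω.2 = true then (1 : ℝ) else 0)| ∧
    (0 < p → p < 1 → 0 < q → q < 1 →
      maxCorrF W Prod.fst Prod.snd = |r - p * q| / Real.sqrt (p * (1 - p) * q * (1 - q))) := by
  obtain ⟨hWpos, hWsum⟩ := hW
  set I1 : Bool × Bool → ℝ := fun ω => if ω.1 = true then (1 : ℝ) else 0 with hI1
  set I2 : Bool × Bool → ℝ := fun ω => if ω.2 = true then (1 : ℝ) else 0 with hI2
  set C := covF W I1 I2 with hCdef
  set Vx := covF W I1 I1 with hVxdef
  set Vy := covF W I2 I2 with hVydef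
  set ρ := pearsonF W I1 I2 with hρdef
  -- representation of an arbitrary f ∘ fst as affine in I1
  have rep1 : ∀ f : Bool → ℝ, (fun ω : Bool × Bool => f ω.1)
      = fun ω => (f true - f false) * I1 ω + f false := by
    intro f; funext ω; rcases ω with ⟨x, y⟩; cases x <;> simp [hI1]
  have rep2 : ∀ g : Bool → ℝ, (fun ω : Bool × Bool => g ω.2)
      = fun ω => (g true - g false) * I2 ω + g false := by
    intro g; funext ω; rcases ω with ⟨x, y⟩; cases y <;> simp [hI2]
  have hVx0 : 0 ≤ Vx := covF_self_nonneg W hWpos hWsum I1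
  have hVy0 : 0 ≤ Vy := covF_self_nonneg W hWpos hWsum I2
  -- the key bound
  have key : ∀ fg : (Bool → ℝ) × (Bool → ℝ),
      pearsonF W (fun ω => fg.1 (Prod.fst ω)) (fun ω => fg.2 (Prod.snd ω)) ≤ |ρ| := by
    rintro ⟨f, g⟩
    set a := f true - f false with ha
    set b := g true - g false with hb
    have e1 : (fun ω : Bool × Bool => f ω.1) = fun ω => a * I1 ω + f false := rep1 f
    have e2 : (fun ω : Bool × Bool => g ω.2) = fun ω => b * I2 ω + g false := rep2 g
    have hcov : covF W (fun ω : Bool × Bool => f ω.1) (fun ω : Bool × Bool => g ω.2)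
        = a * (b * C) := by
      rw [e1, e2, covF_affine_left W hWsum, covF_affine_right W hWsum]
    have hvx : covF W (fun ω : Bool × Bool => f ω.1) (fun ω : Bool × Bool => f ω.1)
        = a * (a * Vx) := by
      rw [e1, covF_affine_left W hWsum, covF_affine_right W hWsum]
    have hvy : covF W (fun ω : Bool × Bool => g ω.2) (fun ω : Bool × Bool => g ω.2)
        = b * (b * Vy) := by
      rw [e2, covF_affine_left W hWsum, covF_affine_right W hWsum]
    show pearsonF W (fun ω : Bool × Bool => f ω.1) (fun ω : Bool × Bool => g ω.2) ≤ |ρ|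
    rw [pearsonF, hcov, hvx, hvy]
    split_ifs with h
    · -- positive variance case
      have hVV : 0 < Vx * Vy := by
        by_contra hc
        push_neg at hc
        nlinarith [sq_nonneg (a * b), sq_nonneg a, sq_nonneg b]
      have hab : a * b ≠ 0 := by
        intro h0
        rw [show a * (a * Vx) * (b * (b * Vy)) = (a*b)^2 * (Vx * Vy) by ring, h0] at h
        simp at h
      have hρval : ρ = C / Real.sqrt (Vx * Vy) := by
        rw [hρdef, pearsonF, if_pos hVV]
      have hsq : Real.sqrt (a * (a * Vx) * (b * (b * Vy)))
          = |a * b| * Real.sqrt (Vx * Vy) := by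
        rw [show a * (a * Vx) * (b * (b * Vy)) = (a*b)^2 * (Vx * Vy) by ring,
          Real.sqrt_mul (sq_nonneg _), Real.sqrt_sq_eq_abs]
      have hsqrtpos : 0 < Real.sqrt (Vx * Vy) := Real.sqrt_pos.2 hVV
      rw [hsq, hρval, abs_div, abs_of_pos hsqrtpos]
      have habpos : 0 < |a * b| := abs_pos.2 hab
      calc a * (b * C) / (|a * b| * Real.sqrt (Vx * Vy))
          ≤ |a * (b * C)| / (|a * b| * Real.sqrt (Vx * Vy)) := by
            apply div_le_div_of_nonneg_right (le_abs_self _) (mul_pos habpos hsqrtpos).le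
        _ = |C| / Real.sqrt (Vx * Vy) := by
            rw [show |a * (b * C)| = |a * b| * |C| by rw [← abs_mul]; ring_nf,
              mul_div_mul_left _ _ (ne_of_gt habpos)]
    · exact abs_nonneg _
  -- the bound is attained
  have attain : ∃ fg : (Bool → ℝ) × (Bool → ℝ),
      pearsonF W (fun ω => fg.1 (Prod.fst ω)) (fun ω => fg.2 (Prod.snd ω)) = |ρ| := by
    by_cases hVV : 0 < Vx * Vy
    · have hρval : ρ = C / Real.sqrt (Vx * Vy) := by
        rw [hρdef, pearsonF, if_pos hVV]
      have hsqrtpos : 0 < Real.sqrt (Vx * Vy) := Real.sqrt_pos.2 hVV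
      by_cases hC : 0 ≤ C
      · refine ⟨⟨fun x => if x = true then 1 else 0, fun y => if y = true then 1 else 0⟩, ?_⟩
        have hρnn : (0:ℝ) ≤ ρ := by rw [hρval]; exact div_nonneg hC hsqrtpos.le
        rw [abs_of_nonneg hρnn]
      · push_neg at hC
        refine ⟨⟨fun x => if x = true then 1 else 0,
          fun y => -(if y = true then 1 else 0)⟩, ?_⟩
        have e2 : (fun ω : Bool × Bool => -(if ω.2 = true then (1:ℝ) else 0))
            = fun ω => (-1) * I2 ω + 0 := by funext ω; simp only [hI2]; ring
        have hcov : covF W I1 (fun ω : Bool × Bool => -(if ω.2 = true then (1:ℝ) else 0))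
            = -C := by rw [e2, covF_affine_right W hWsum]; ring
        have hvy : covF W (fun ω : Bool × Bool => -(if ω.2 = true then (1:ℝ) else 0))
            (fun ω : Bool × Bool => -(if ω.2 = true then (1:ℝ) else 0)) = Vy := by
          rw [e2, covF_affine_left W hWsum, covF_affine_right W hWsum]; ring
        show pearsonF W I1 (fun ω : Bool × Bool => -(if ω.2 = true then (1:ℝ) else 0)) = |ρ|
        rw [pearsonF, hcov, hvy, ← hVxdef, if_pos hVV]
        rw [hρval, abs_div, abs_of_pos hsqrtpos, abs_of_neg hC]
    · refine ⟨⟨fun _ => 0, fun _ => 0⟩, ?_⟩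
      have h0 : covF W (fun _ : Bool × Bool => (0:ℝ)) (fun _ : Bool × Bool => (0:ℝ)) = 0 := by
        simp [covF, EE]
      have hρ0 : ρ = 0 := by rw [hρdef, pearsonF, if_neg hVV]
      rw [hρ0, abs_zero, pearsonF, if_neg]
      rw [h0]; simp
  -- conclude the first part
  have hbdd : BddAbove (Set.range fun fg : (Bool → ℝ) × (Bool → ℝ) =>
      pearsonF W (fun ω => fg.1 (Prod.fst ω)) (fun ω => fg.2 (Prod.snd ω))) := by
    refine ⟨|ρ|, ?_⟩
    rintro x ⟨fg, rfl⟩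
    exact key fg
  have hmain : maxCorrF W Prod.fst Prod.snd = |ρ| := by
    rw [maxCorrF]
    apply le_antisymm
    · exact ciSup_le key
    · obtain ⟨fg0, hfg0⟩ := attain
      rw [← hfg0]
      exact le_ciSup hbdd fg0
  refine ⟨hmain, ?_⟩
  intro hp0 hp1 hq0 hq1
  have hVx : Vx = p * (1 - p) := by
    rw [hVxdef, hI1]; subst hp
    simp [covF, EE, Fintype.sum_prod_type]
    try ring
  have hVy : Vy = q * (1 - q) := by
    rw [hVydef, hI2]; subst hq
    simp [covF, EE, Fintype.sum_prod_type]
    try ring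
  have hC : C = r - p * q := by
    rw [hCdef, hI1, hI2]; subst hp; subst hq; subst hr
    simp [covF, EE, Fintype.sum_prod_type]
    try ring
  have hVV : 0 < Vx * Vy := by
    rw [hVx, hVy]
    have := mul_pos (mul_pos hp0 (by linarith : (0:ℝ) < 1 - p))
      (mul_pos hq0 (by linarith : (0:ℝ) < 1 - q))
    linarith [this]
  have hsqrtpos : 0 < Real.sqrt (Vx * Vy) := Real.sqrt_pos.2 hVV
  rw [hmain, hρdef, pearsonF, if_pos hVV, abs_div, abs_of_pos hsqrtpos, ← hCdef, hC, hVx, hVy]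
  congr 1
  rw [show p * (1 - p) * (q * (1 - q)) = p * (1 - p) * q * (1 - q) by ring]
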